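/- arXiv:1507.06391 — 7 statements merged into one kernel-verified Lean document; each statement's English description precedes it below -/
import Mathlib

section
/- Let r ≥ 2 be an integer, let m_1, …, m_r be nonnegative real numbers, and let n_1 ≥ n_2 ≥ … ≥ n_r > 0 be integers with n_1 ≥ 2. Assume that if r = 2 then (n_1, n_2) ≠ (2, 2). Then ((r+3)/(r+2)) · (Σ_{i=1}^r m_i²) · (Σ_{i=1}^r n_i² − n_r) ≥ (Σ_{i=1}^r m_i n_i)². -/
/-!
By Cauchy–Schwarz, `(∑ mᵢ nᵢ)² ≤ (∑ mᵢ²)(∑ nᵢ²)`, so it suffices that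
`(r + 2) ∑ nᵢ² ≤ (r + 3)(∑ nᵢ² - n_r)`, i.e. `(r + 3) n_r ≤ ∑ nᵢ²`.
If `n_r = 1` this follows from `n₁² ≥ 4` and `nᵢ² ≥ 1`; if `n_r ≥ 2` then
`∑ nᵢ² ≥ r n_r² ≥ 2 r n_r`, which suffices for `r ≥ 3`, while for `r = 2` the
excluded case `n₁ = n₂ = 2` is exactly where `n₁² + n₂² < 5 n₂`.
-/

open Finset

theorem Finset.card_mul_sq_le_sum_sq {ι R : Type*} [Semiring R] [PartialOrder R]
    [IsOrderedRing R] {s : Finset ι} {n : ι → R} {k : R} (hk : 0 ≤ k)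
    (hkn : ∀ i ∈ s, k ≤ n i) : #s * k ^ 2 ≤ ∑ i ∈ s, n i ^ 2 := by
  simpa [nsmul_eq_mul] using
    s.card_nsmul_le_sum (fun i ↦ n i ^ 2) (k ^ 2) fun i hi ↦ pow_le_pow_left₀ hk (hkn i hi) 2

theorem le_div_mul_sub_of_mul_le {a S c d : ℝ} (hc : 0 < c) (hd : d = c + 1)
    (h : d * a ≤ S) : S ≤ d / c * (S - a) := by
  subst hd
  rw [div_mul_eq_mul_div, le_div_iff₀ hc]
  linarith

theorem add_three_mul_le_sum_sq (r : ℕ) (hr : 2 ≤ r) (n : ℕ → ℤ)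
    (hmono : ∀ i j, 1 ≤ i → i ≤ j → j ≤ r → n j ≤ n i)
    (hpos : ∀ i ∈ Icc 1 r, 0 < n i) (hn1 : 2 ≤ n 1)
    (hr2 : r = 2 → ¬(n 1 = 2 ∧ n 2 = 2)) :
    ((r : ℤ) + 3) * n r ≤ ∑ i ∈ Icc 1 r, n i ^ 2 := by
  have hle : ∀ i ∈ Icc 1 r, n r ≤ n i := fun i hi ↦
    hmono i r (mem_Icc.1 hi).1 (mem_Icc.1 hi).2 le_rfl
  obtain hnr | hnr : n r = 1 ∨ 2 ≤ n r := by
    have := hpos r (mem_Icc.2 ⟨by omega, le_rfl⟩); omega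
  · have h1 : 1 ∈ Icc 1 r := mem_Icc.2 ⟨le_rfl, by omega⟩
    have hrest : #((Icc 1 r).erase 1) * (1 : ℤ) ^ 2 ≤ ∑ i ∈ (Icc 1 r).erase 1, n i ^ 2 :=
      card_mul_sq_le_sum_sq zero_le_one fun i hi ↦ hpos i (mem_of_mem_erase hi)
    rw [cast_card_erase_of_mem h1, Nat.card_Icc, Nat.add_sub_cancel] at hrest
    rw [← add_sum_erase _ _ h1, hnr]
    nlinarith
  · obtain rfl | hr3 := eq_or_lt_of_le hr
    · have h21 := hmono 1 2 le_rfl one_le_two le_rfl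
      have hne := hr2 rfl
      simp only [sum_Icc_succ_top, Icc_self, sum_singleton, Nat.reduceAdd, Nat.one_le_ofNat]
      push_cast
      rcases eq_or_lt_of_le hnr with hn2 | hn2
      · have : 3 ≤ n 1 := by omega
        nlinarith
      · nlinarith
    · have hsum := card_mul_sq_le_sum_sq (by omega) hle
      rw [Nat.card_Icc, Nat.add_sub_cancel] at hsum
      have hr3' : (3 : ℤ) ≤ r := by exact_mod_cast hr3
      calc ((r : ℤ) + 3) * n r ≤ (r * n r) * n r :=
            mul_le_mul_of_nonneg_right (by nlinarith) (by omega)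
        _ = r * n r ^ 2 := by ring
        _ ≤ _ := hsum

theorem stmt_0_general (r : ℕ) (hr : 2 ≤ r) (m : ℕ → ℝ) (n : ℕ → ℤ)
    (hmono : ∀ i j, 1 ≤ i → i ≤ j → j ≤ r → n j ≤ n i)
    (hpos : ∀ i ∈ Finset.Icc 1 r, 0 < n i)
    (hn1 : 2 ≤ n 1)
    (hr2 : r = 2 → ¬(n 1 = 2 ∧ n 2 = 2)) :
    ((r : ℝ) + 3) / ((r : ℝ) + 2) * (∑ i ∈ Finset.Icc 1 r, (m i) ^ 2) *
        ((∑ i ∈ Finset.Icc 1 r, ((n i : ℝ)) ^ 2) - (n r : ℝ)) ≥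
      (∑ i ∈ Finset.Icc 1 r, m i * (n i : ℝ)) ^ 2 := by
  have hkey : ((r : ℝ) + 3) * n r ≤ ∑ i ∈ Icc 1 r, ((n i : ℝ)) ^ 2 := by
    exact_mod_cast add_three_mul_le_sum_sq r hr n hmono hpos hn1 hr2
  have hS := le_div_mul_sub_of_mul_le (by positivity : (0 : ℝ) < r + 2) (by ring) hkey
  calc (∑ i ∈ Icc 1 r, m i * (n i : ℝ)) ^ 2
      ≤ (∑ i ∈ Icc 1 r, m i ^ 2) * ∑ i ∈ Icc 1 r, ((n i : ℝ)) ^ 2 :=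
        sum_mul_sq_le_sq_mul_sq _ _ _
    _ ≤ (∑ i ∈ Icc 1 r, m i ^ 2) *
          (((r : ℝ) + 3) / (r + 2) * (∑ i ∈ Icc 1 r, ((n i : ℝ)) ^ 2 - n r)) :=
        mul_le_mul_of_nonneg_left hS (sum_nonneg fun i _ ↦ sq_nonneg _)
    _ = _ := by ring

/-- Lemma 2.2 of the paper (non-strict part): for `r ≥ 2`, nonnegative reals
`m_1, …, m_r` and integers `n_1 ≥ n_2 ≥ … ≥ n_r > 0` with `n_1 ≥ 2`, assuming
`(n_1, n_2) ≠ (2, 2)` when `r = 2`, we have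
`((r+3)/(r+2)) · (Σ m_i²) · (Σ n_i² − n_r) ≥ (Σ m_i n_i)²`. -/
theorem stmt_0 (r : ℕ) (hr : 2 ≤ r) (m : ℕ → ℝ) (n : ℕ → ℤ)
    (hm : ∀ i ∈ Finset.Icc 1 r, 0 ≤ m i)
    (hmono : ∀ i j, 1 ≤ i → i ≤ j → j ≤ r → n j ≤ n i)
    (hpos : ∀ i ∈ Finset.Icc 1 r, 0 < n i)
    (hn1 : 2 ≤ n 1)
    (hr2 : r = 2 → ¬(n 1 = 2 ∧ n 2 = 2)) :
    ((r : ℝ) + 3) / ((r : ℝ) + 2) * (∑ i ∈ Finset.Icc 1 r, (m i) ^ 2) *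
        ((∑ i ∈ Finset.Icc 1 r, ((n i : ℝ)) ^ 2) - (n r : ℝ)) ≥
      (∑ i ∈ Finset.Icc 1 r, m i * (n i : ℝ)) ^ 2 :=
  stmt_0_general r hr m n hmono hpos hn1 hr2
end

section
/- Let r ≥ 2 be an integer, let m_1, …, m_r be nonnegative real numbers not all zero, and let n_1 ≥ n_2 ≥ … ≥ n_r > 0 be integers with n_1 ≥ 2. Assume that if r = 2 then (n_1, n_2) ≠ (2, 2), that (n_1, n_2, …, n_r) ≠ (2, 1, …, 1), and that it is not the case that r = 3 and (n_1, n_2, n_3) = (2, 2, 2). Then ((r+3)/(r+2)) · (Σ_{i=1}^r m_i²) · (Σ_{i=1}^r n_i² − n_r) > (Σ_{i=1}^r m_i n_i)². -/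
/-!
By Cauchy–Schwarz, `(∑ mᵢ nᵢ)² ≤ (∑ mᵢ²) S` with `S = ∑ nᵢ²`, so it suffices that
`(r + 3)(S - n_r) > (r + 2) S`, i.e. `S > (r + 3) n_r`. Since the `nᵢ` decrease,
`S ≥ n₁² + n₂² + (r - 2) n_r²`, and the resulting integer inequality is checked by cases
`n_r = 1`, `n_r = 2`, `n_r ≥ 3`; it fails exactly in the excluded configurations.
-/
open Finset

theorem mul_lt_sq_add_sq_add_mul_sq {r a b c : ℤ} (hr : 2 ≤ r) (hc : 1 ≤ c) (hcb : c ≤ b)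
    (hba : b ≤ a) (ha : 2 ≤ a) (h1 : c = 1 → a = 2 → 2 ≤ b) (h2 : c = 2 → r ≤ 3 → 3 ≤ a) :
    (r + 3) * c < a ^ 2 + b ^ 2 + (r - 2) * c ^ 2 := by
  obtain rfl | rfl | hc3 : c = 1 ∨ c = 2 ∨ 3 ≤ c := by omega
  · obtain ha2 | ha3 : a = 2 ∨ 3 ≤ a := by omega
    · nlinarith [h1 rfl ha2]
    · nlinarith
  · obtain hr3 | hr4 : r ≤ 3 ∨ 4 ≤ r := by omega
    · nlinarith [h2 rfl hr3]
    · nlinarith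
  · nlinarith [mul_le_mul_of_nonneg_left hc3 (by omega : (0 : ℤ) ≤ r - 2)]

theorem sq_add_sq_add_mul_sq_le_sum_Icc_sq {R : Type*} [CommRing R] [LinearOrder R]
    [IsStrictOrderedRing R] {r : ℕ} {n : ℕ → R} (hr : 2 ≤ r)
    (hmono : ∀ i j, 1 ≤ i → i ≤ j → j ≤ r → n j ≤ n i) (hnr : 0 ≤ n r) :
    n 1 ^ 2 + n 2 ^ 2 + ((r : R) - 2) * n r ^ 2 ≤ ∑ i ∈ Icc 1 r, n i ^ 2 := by
  have hsplit : Icc 1 r = insert 1 (insert 2 (Icc 3 r)) := by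
    ext x; simp only [mem_Icc, mem_insert]; omega
  have htail : ((r : R) - 2) * n r ^ 2 ≤ ∑ i ∈ Icc 3 r, n i ^ 2 := by
    have hcard : ((#(Icc 3 r) : ℕ) : R) = (r : R) - 2 := by
      rw [Nat.card_Icc, Nat.cast_sub (by omega)]; push_cast; ring
    rw [← hcard, ← nsmul_eq_mul]
    refine card_nsmul_le_sum _ _ _ fun i hi => ?_
    rw [mem_Icc] at hi
    exact pow_le_pow_left₀ hnr (hmono i r (by omega) hi.2 le_rfl) 2
  rw [hsplit, sum_insert (by simp), sum_insert (by simp), ← add_assoc]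
  gcongr

theorem sq_lt_div_mul_mul_sub {r c S M P : ℝ} (hr : 0 < r + 2) (hM : 0 < M)
    (hS : (r + 3) * c < S) (hP : P ^ 2 ≤ M * S) :
    P ^ 2 < (r + 3) / (r + 2) * M * (S - c) := by
  have hdiff : (r + 3) / (r + 2) * M * (S - c) - M * S = M * (S - (r + 3) * c) / (r + 2) := by
    field_simp; ring
  have : 0 < M * (S - (r + 3) * c) / (r + 2) := by
    have := sub_pos.2 hS; positivity
  linarith

theorem add_three_mul_lt_sum_Icc_sq (r : ℕ) (hr : 2 ≤ r) (n : ℕ → ℤ)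
    (hmono : ∀ i j, 1 ≤ i → i ≤ j → j ≤ r → n j ≤ n i) (hnr : 0 < n r) (hn1 : 2 ≤ n 1)
    (hr2 : r = 2 → ¬(n 1 = 2 ∧ n 2 = 2))
    (hne21 : ¬(n 1 = 2 ∧ ∀ i, 2 ≤ i → i ≤ r → n i = 1))
    (hne222 : ¬(r = 3 ∧ n 1 = 2 ∧ n 2 = 2 ∧ n 3 = 2)) :
    ((r : ℤ) + 3) * n r < ∑ i ∈ Icc 1 r, n i ^ 2 := by
  have hn2r : n r ≤ n 2 := hmono 2 r (by norm_num) hr le_rfl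
  have hn12 : n 2 ≤ n 1 := hmono 1 2 le_rfl (by norm_num) hr
  have h1 : n r = 1 → n 1 = 2 → 2 ≤ n 2 := by
    intro _ hn1
    obtain ⟨j, hj2, hjr, hj⟩ : ∃ j, 2 ≤ j ∧ j ≤ r ∧ n j ≠ 1 := by
      by_contra! h; exact hne21 ⟨hn1, h⟩
    have := hmono j r (by omega) hjr le_rfl
    have := hmono 2 j (by norm_num) hj2 hjr
    omega
  have h2 : n r = 2 → (r : ℤ) ≤ 3 → 3 ≤ n 1 := by
    intro hc hr3
    obtain rfl | rfl : r = 2 ∨ r = 3 := by omega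
    · have := hr2 rfl; omega
    · have := hne222; omega
  calc ((r : ℤ) + 3) * n r
      < n 1 ^ 2 + n 2 ^ 2 + ((r : ℤ) - 2) * n r ^ 2 :=
        mul_lt_sq_add_sq_add_mul_sq (by omega) hnr hn2r hn12 hn1 h1 h2
    _ ≤ ∑ i ∈ Icc 1 r, n i ^ 2 := sq_add_sq_add_mul_sq_le_sum_Icc_sq hr hmono hnr.le

theorem stmt_1_general (r : ℕ) (hr : 2 ≤ r) (m : ℕ → ℝ) (n : ℕ → ℤ)
    (hm0 : ∃ i ∈ Finset.Icc 1 r, m i ≠ 0)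
    (hmono : ∀ i j, 1 ≤ i → i ≤ j → j ≤ r → n j ≤ n i)
    (hpos : ∀ i ∈ Finset.Icc 1 r, 0 < n i)
    (hn1 : 2 ≤ n 1)
    (hr2 : r = 2 → ¬(n 1 = 2 ∧ n 2 = 2))
    (hne21 : ¬(n 1 = 2 ∧ ∀ i, 2 ≤ i → i ≤ r → n i = 1))
    (hne222 : ¬(r = 3 ∧ n 1 = 2 ∧ n 2 = 2 ∧ n 3 = 2)) :
    ((r : ℝ) + 3) / ((r : ℝ) + 2) * (∑ i ∈ Finset.Icc 1 r, (m i) ^ 2) *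
        ((∑ i ∈ Finset.Icc 1 r, ((n i : ℝ)) ^ 2) - (n r : ℝ)) >
      (∑ i ∈ Finset.Icc 1 r, m i * (n i : ℝ)) ^ 2 := by
  have hnr : 0 < n r := hpos r (by simp only [mem_Icc]; omega)
  have hS : ((r : ℝ) + 3) * n r < ∑ i ∈ Icc 1 r, (n i : ℝ) ^ 2 := by
    exact_mod_cast add_three_mul_lt_sum_Icc_sq r hr n hmono hnr hn1 hr2 hne21 hne222
  have hM : 0 < ∑ i ∈ Icc 1 r, m i ^ 2 := by
    obtain ⟨i, hi, hmi⟩ := hm0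
    exact lt_of_lt_of_le (sq_pos_of_ne_zero hmi) (single_le_sum (fun j _ => sq_nonneg (m j)) hi)
  exact sq_lt_div_mul_mul_sub (by positivity) hM hS (sum_mul_sq_le_sq_mul_sq _ _ _)

/-- Lemma 2.2 of the paper (strict part): for `r ≥ 2`, nonnegative reals
`m_1, …, m_r` not all zero, and integers `n_1 ≥ n_2 ≥ … ≥ n_r > 0` with `n_1 ≥ 2`,
assuming `(n_1, n_2) ≠ (2, 2)` when `r = 2`, `(n_1, …, n_r) ≠ (2, 1, …, 1)`,
and not (`r = 3` and `(n_1, n_2, n_3) = (2, 2, 2)`), we have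
`((r+3)/(r+2)) · (Σ m_i²) · (Σ n_i² − n_r) > (Σ m_i n_i)²`. -/
theorem stmt_1 (r : ℕ) (hr : 2 ≤ r) (m : ℕ → ℝ) (n : ℕ → ℤ)
    (hm : ∀ i ∈ Finset.Icc 1 r, 0 ≤ m i)
    (hm0 : ∃ i ∈ Finset.Icc 1 r, m i ≠ 0)
    (hmono : ∀ i j, 1 ≤ i → i ≤ j → j ≤ r → n j ≤ n i)
    (hpos : ∀ i ∈ Finset.Icc 1 r, 0 < n i)
    (hn1 : 2 ≤ n 1)
    (hr2 : r = 2 → ¬(n 1 = 2 ∧ n 2 = 2))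
    (hne21 : ¬(n 1 = 2 ∧ ∀ i, 2 ≤ i → i ≤ r → n i = 1))
    (hne222 : ¬(r = 3 ∧ n 1 = 2 ∧ n 2 = 2 ∧ n 3 = 2)) :
    ((r : ℝ) + 3) / ((r : ℝ) + 2) * (∑ i ∈ Finset.Icc 1 r, (m i) ^ 2) *
        ((∑ i ∈ Finset.Icc 1 r, ((n i : ℝ)) ^ 2) - (n r : ℝ)) >
      (∑ i ∈ Finset.Icc 1 r, m i * (n i : ℝ)) ^ 2 :=
  stmt_1_general r hr m n hm0 hmono hpos hn1 hr2 hne21 hne222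
end

section
/- Let r ≥ 9 be an integer and let n_1 ≥ n_2 ≥ … ≥ n_r ≥ 3 be integers with n_1 > 11. Then ((3r+40)·r/(3r+39)) · (Σ_{i=1}^r n_i² − n_r) > (Σ_{i=1}^r n_i)². -/
/-!
Write `S = Σ nᵢ`, `Q = Σ nᵢ²` and `t = n_r`. Cauchy–Schwarz gives `S² ≤ r Q`, so it suffices that
`(3r+40)(Q - t) > (3r+39) Q`, i.e. `Q > (3r+40) t`. Since every `nᵢ ≥ t` and `n₁ ≥ 12`,
`Q ≥ 144 + (r-1) t²`, and `144 + (r-1) t² - (3r+40) t` is increasing in `r` for `t ≥ 3`; at `r = 9`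
it is `8t² - 67t + 144`, which has negative discriminant.
-/

open Finset

lemma sq_add_card_sub_one_mul_sq_le_sum_sq {ι : Type*} [DecidableEq ι] {s : Finset ι} {i₀ : ι}
    (hi₀ : i₀ ∈ s) {f : ι → ℝ} {t : ℝ} (ht : 0 ≤ t) (hf : ∀ i ∈ s, t ≤ f i) :
    f i₀ ^ 2 + ((#s : ℝ) - 1) * t ^ 2 ≤ ∑ i ∈ s, f i ^ 2 := by
  rw [← add_sum_erase s _ hi₀, ← cast_card_erase_of_mem hi₀, ← nsmul_eq_mul]
  gcongr
  exact card_nsmul_le_sum _ _ _ fun i hi ↦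
    pow_le_pow_left₀ ht (hf i (mem_of_mem_erase hi)) 2

lemma mul_add_forty_lt_sq_add_sub_one_mul_sq {r a t : ℝ} (hr : 9 ≤ r) (ha : 12 ≤ a) (ht : 3 ≤ t) :
    (3 * r + 40) * t < a ^ 2 + (r - 1) * t ^ 2 := by
  have hr_mono : 0 ≤ (r - 9) * (t * (t - 3)) :=
    mul_nonneg (by linarith) (mul_nonneg (by linarith) (by linarith))
  have hdisc : 0 < 8 * t ^ 2 - 67 * t + 144 := by nlinarith [sq_nonneg (16 * t - 67)]
  nlinarith

lemma sq_lt_of_sq_le_mul_of_lt {r S Q t : ℝ} (hr : 0 < r) (hCS : S ^ 2 ≤ r * Q)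
    (hQ : (3 * r + 40) * t < Q) :
    S ^ 2 < (3 * r + 40) * r / (3 * r + 39) * (Q - t) := by
  have hden : 0 < 3 * r + 39 := by linarith
  rw [div_mul_eq_mul_div, lt_div_iff₀ hden]
  nlinarith [mul_pos hr (sub_pos.mpr hQ)]

/-- Lemma 2.10 of the paper: for `r ≥ 9` and integers `n_1 ≥ n_2 ≥ … ≥ n_r ≥ 3`
with `n_1 > 11`, we have
`((3r+40)·r/(3r+39)) · (Σ n_i² − n_r) > (Σ n_i)²`. -/
theorem stmt_3 (r : ℕ) (hr : 9 ≤ r) (n : ℕ → ℤ)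
    (hmono : ∀ i j, 1 ≤ i → i ≤ j → j ≤ r → n j ≤ n i)
    (h3 : ∀ i ∈ Finset.Icc 1 r, 3 ≤ n i)
    (hn1 : 11 < n 1) :
    (3 * (r : ℝ) + 40) * (r : ℝ) / (3 * (r : ℝ) + 39) *
        ((∑ i ∈ Finset.Icc 1 r, ((n i : ℝ)) ^ 2) - (n r : ℝ)) >
      (∑ i ∈ Finset.Icc 1 r, (n i : ℝ)) ^ 2 := by
  have hr_mem : r ∈ Icc 1 r := by simp; omega
  have h1_mem : 1 ∈ Icc 1 r := by simp; omega
  have ht : (3 : ℝ) ≤ n r := by exact_mod_cast h3 r hr_mem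
  have ha : (12 : ℝ) ≤ n 1 := by exact_mod_cast hn1
  have hCS := sq_sum_le_card_mul_sum_sq (s := Icc 1 r) (f := fun i ↦ (n i : ℝ))
  rw [Nat.card_Icc, Nat.add_sub_cancel] at hCS
  have hQ := sq_add_card_sub_one_mul_sq_le_sum_sq h1_mem (f := fun i ↦ (n i : ℝ))
    (by linarith : (0 : ℝ) ≤ n r) fun i hi ↦ by
      have hi' := mem_Icc.mp hi
      exact_mod_cast hmono i r hi'.1 hi'.2 le_rfl
  rw [Nat.card_Icc, Nat.add_sub_cancel] at hQ
  exact sq_lt_of_sq_le_mul_of_lt (by positivity) hCS <|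
    (mul_add_forty_lt_sq_add_sub_one_mul_sq (by exact_mod_cast hr) ha ht).trans_le hQ
end

section
/- Let r ≥ 2 be an integer and let n_1 ≥ n_2 ≥ … ≥ n_r > 0 be positive integers with n_1 ≥ 12. Then ((r+3)·r/(r+2)) · (n_1² + n_2² + … + n_r² − 1) > (n_1 + n_2 + … + n_r + 1/2)². -/
/-!
Split off the first term `a = n₁` and write `T`, `Q` for the sum and the sum of squares of the
remaining `r - 1` terms. Cauchy–Schwarz gives `T² ≤ (r - 1) Q`, which reduces the claim to an
inequality in `a` and `T` alone. That inequality is quadratic in `T` with positive leading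
coefficient `2 (r + 1)`, and completing the square leaves a remainder which is positive as soon as
`a ≥ 4`.
-/

lemma mul_sq_add_add_half_lt (ρ a t : ℝ) (hρ : 2 ≤ ρ) (ha : 4 ≤ a) :
    (ρ - 1) * (ρ + 2) * (a + t + 1 / 2) ^ 2 < ρ * (ρ + 3) * ((ρ - 1) * (a ^ 2 - 1) + t ^ 2) := by
  have hrem : 0 < ρ * (a ^ 2 - a - 9 / 4) - 2 * a - 5 / 2 := by
    nlinarith [mul_le_mul_of_nonneg_right hρ (by nlinarith : (0 : ℝ) ≤ a ^ 2 - a - 9 / 4)]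
  have hpos : 0 < (ρ - 1) * ρ * (ρ + 3) * (ρ * (a ^ 2 - a - 9 / 4) - 2 * a - 5 / 2) := by
    have : 0 < ρ - 1 := by linarith
    positivity
  have hcomplete :
      (2 * ρ + 2) * (ρ * (ρ + 3) * ((ρ - 1) * (a ^ 2 - 1) + t ^ 2)
          - (ρ - 1) * (ρ + 2) * (a + t + 1 / 2) ^ 2) =
        ((2 * ρ + 2) * t - (ρ - 1) * (ρ + 2) * (a + 1 / 2)) ^ 2
          + (ρ - 1) * ρ * (ρ + 3) * (ρ * (a ^ 2 - a - 9 / 4) - 2 * a - 5 / 2) := by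
    ring
  nlinarith [sq_nonneg ((2 * ρ + 2) * t - (ρ - 1) * (ρ + 2) * (a + 1 / 2))]

lemma sq_add_add_half_lt_of_sq_le (ρ a T Q : ℝ) (hρ : 2 ≤ ρ) (ha : 4 ≤ a)
    (hTQ : T ^ 2 ≤ (ρ - 1) * Q) :
    (a + T + 1 / 2) ^ 2 < (ρ + 3) * ρ / (ρ + 2) * (a ^ 2 + Q - 1) := by
  have hkey := mul_sq_add_add_half_lt ρ a T hρ ha
  have hQ := mul_le_mul_of_nonneg_left hTQ (by positivity : (0 : ℝ) ≤ ρ * (ρ + 3))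
  rw [div_mul_eq_mul_div, lt_div_iff₀ (by linarith)]
  nlinarith [sq_nonneg (a + T + 1 / 2)]

theorem stmt_5_general (r : ℕ) (hr : 2 ≤ r) (n : ℕ → ℤ)
    (hn1 : 12 ≤ n 1) :
    ((r : ℝ) + 3) * (r : ℝ) / ((r : ℝ) + 2) *
        ((∑ i ∈ Finset.Icc 1 r, ((n i : ℝ)) ^ 2) - 1) >
      ((∑ i ∈ Finset.Icc 1 r, (n i : ℝ)) + 1 / 2) ^ 2 := by
  have hsplit : Finset.Icc 1 r = insert 1 (Finset.Icc 2 r) := by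
    ext i
    simp only [Finset.mem_Icc, Finset.mem_insert]
    omega
  have h1 : 1 ∉ Finset.Icc 2 r := by simp
  have hcard : ((Finset.Icc 2 r).card : ℝ) = r - 1 := by
    rw [Nat.card_Icc, Nat.cast_sub (by omega)]
    push_cast
    ring
  have hcauchy := sq_sum_le_card_mul_sum_sq (s := Finset.Icc 2 r) (f := fun i => (n i : ℝ))
  rw [hcard] at hcauchy
  rw [hsplit, Finset.sum_insert h1, Finset.sum_insert h1]
  exact sq_add_add_half_lt_of_sq_le r (n 1) _ _ (by exact_mod_cast hr)
    (by exact_mod_cast (by omega : (4 : ℤ) ≤ n 1)) hcauchy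

/-- Lemma 3.7 of the paper: for `r ≥ 2` and positive integers
`n_1 ≥ n_2 ≥ … ≥ n_r > 0` with `n_1 ≥ 12`, we have
`((r+3)·r/(r+2)) · (Σ n_i² − 1) > (Σ n_i + 1/2)²`. -/
theorem stmt_5 (r : ℕ) (hr : 2 ≤ r) (n : ℕ → ℤ)
    (hmono : ∀ i j, 1 ≤ i → i ≤ j → j ≤ r → n j ≤ n i)
    (hpos : ∀ i ∈ Finset.Icc 1 r, 0 < n i)
    (hn1 : 12 ≤ n 1) :
    ((r : ℝ) + 3) * (r : ℝ) / ((r : ℝ) + 2) *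
        ((∑ i ∈ Finset.Icc 1 r, ((n i : ℝ)) ^ 2) - 1) >
      ((∑ i ∈ Finset.Icc 1 r, (n i : ℝ)) + 1 / 2) ^ 2 :=
  stmt_5_general r hr n hn1
end

section
/- Let r ≥ 5 be an integer and let m_1, …, m_r and n_1, …, n_r be integers with m_i ≥ 2 and n_i ≥ 1 for all i. Set a = Σ_{i=1}^r (m_i+1)², b = Σ_{i=1}^r n_i², and c = Σ_{i=1}^r (m_i+1)·n_i. Then (r+3)·a·b ≥ (r+2)·(c+1)². -/
/-! Each term `(m_i + 1) n_i` is at least `3`, so `c ≥ 3r ≥ 2r + 5` once `r ≥ 5`, and for such `c`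
the quadratic `c² - (r + 2)(2c + 1)` is nonnegative, i.e. `(r + 2)(c + 1)² ≤ (r + 3)c²`.
Cauchy–Schwarz `c² ≤ ab` finishes the proof. -/

theorem add_two_mul_add_one_sq_le_add_three_mul_sq {R : Type*} [CommRing R] [LinearOrder R]
    [IsStrictOrderedRing R] {k c : R} (hk : 0 ≤ k) (hc : 2 * k + 5 ≤ c) :
    (k + 2) * (c + 1) ^ 2 ≤ (k + 3) * c ^ 2 := by
  have hquad : k + 2 ≤ c * (c - (2 * k + 4)) := by nlinarith
  linear_combination hquad

theorem card_mul_three_le_sum_add_one_mul {ι : Type*} (s : Finset ι) {m n : ι → ℤ}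
    (hm : ∀ i ∈ s, 2 ≤ m i) (hn : ∀ i ∈ s, 1 ≤ n i) :
    3 * (s.card : ℤ) ≤ ∑ i ∈ s, (m i + 1) * n i := by
  rw [mul_comm, ← nsmul_eq_mul]
  exact s.card_nsmul_le_sum _ _ fun i hi => by nlinarith [hm i hi, hn i hi]

/-- The arithmetic inequality in the proof of Theorem 3.1 of the paper: for
`r ≥ 5` and integers `m_i ≥ 2`, `n_i ≥ 1`, setting `a = Σ (m_i+1)²`,
`b = Σ n_i²` and `c = Σ (m_i+1)·n_i`, we have `(r+3)·a·b ≥ (r+2)·(c+1)²`. -/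
theorem stmt_11 (r : ℕ) (hr : 5 ≤ r) (m n : ℕ → ℤ)
    (hm : ∀ i ∈ Finset.Icc 1 r, 2 ≤ m i)
    (hn : ∀ i ∈ Finset.Icc 1 r, 1 ≤ n i) :
    ((r : ℤ) + 3) * (∑ i ∈ Finset.Icc 1 r, (m i + 1) ^ 2) *
        (∑ i ∈ Finset.Icc 1 r, (n i) ^ 2) ≥
      ((r : ℤ) + 2) * ((∑ i ∈ Finset.Icc 1 r, (m i + 1) * n i) + 1) ^ 2 := by
  set c := ∑ i ∈ Finset.Icc 1 r, (m i + 1) * n i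
  have hc : 3 * (r : ℤ) ≤ c := by
    simpa using card_mul_three_le_sum_add_one_mul _ hm hn
  have hcauchy : c ^ 2 ≤ (∑ i ∈ Finset.Icc 1 r, (m i + 1) ^ 2) * ∑ i ∈ Finset.Icc 1 r, n i ^ 2 :=
    Finset.sum_mul_sq_le_sq_mul_sq _ _ _
  have hr' : (5 : ℤ) ≤ r := by exact_mod_cast hr
  calc ((r : ℤ) + 2) * (c + 1) ^ 2
      ≤ ((r : ℤ) + 3) * c ^ 2 :=
        add_two_mul_add_one_sq_le_add_three_mul_sq (by positivity) (by linarith)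
    _ ≤ _ := by rw [mul_assoc]; gcongr
end

section
/- Let r ≥ 2 be an integer, let d and e be positive real numbers, let m_1, …, m_r be nonnegative real numbers, and let n_1 ≥ n_2 ≥ … ≥ n_r ≥ 1 be integers with n_1 ≥ 2. Assume that if r = 2 then (n_1, n_2) ≠ (2, 2), that (n_1, …, n_r) ≠ (2, 1, …, 1), and that it is not the case that r = 3 and (n_1, n_2, n_3) = (2, 2, 2). If d² ≥ ((r+3)/(r+2)) · Σ_{i=1}^r m_i² and e² ≥ Σ_{i=1}^r n_i² − n_r, then d·e > Σ_{i=1}^r m_i n_i. -/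
/-! Write `M = Σ mᵢ²`, `N = Σ nᵢ²` and `t = n_r`. Outside the excluded multiplicity vectors one has
`N ≥ (r + 3) t + 1`, which is exactly `(r + 3) (N - t) ≥ (r + 2) N + 1`. Hence
`(r + 2) (d e)² ≥ (r + 3) M (N - t) ≥ (r + 2) M N + M`, which beats `(r + 2) (Σ mᵢ nᵢ)²`
by Cauchy–Schwarz as soon as `Σ mᵢ nᵢ > 0` (forcing `M > 0`). -/

open Finset

lemma sq_add_sq_add_mul_sq_le_sum_sq {r : ℕ} (hr : 2 ≤ r) {n : ℕ → ℤ}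
    (hanti : AntitoneOn n (Set.Icc 1 r)) (hnr : 0 ≤ n r) :
    n 1 ^ 2 + n 2 ^ 2 + ((r : ℤ) - 2) * n r ^ 2 ≤ ∑ i ∈ Icc 1 r, n i ^ 2 := by
  have hsplit : Icc 1 r = insert 1 (insert 2 (Icc 3 r)) := by
    ext i; simp only [mem_Icc, mem_insert]; omega
  rw [hsplit, sum_insert (by simp), sum_insert (by simp), ← add_assoc]
  gcongr
  have hcard : ((#(Icc 3 r) : ℕ) : ℤ) = (r : ℤ) - 2 := by
    rw [Nat.card_Icc]; omega
  rw [← hcard, ← nsmul_eq_mul]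
  refine card_nsmul_le_sum _ _ _ fun i hi => ?_
  rw [mem_Icc] at hi
  exact pow_le_pow_left₀ hnr
    (hanti ⟨by omega, hi.2⟩ ⟨by omega, le_rfl⟩ hi.2) 2

lemma mul_add_one_le_sq_add_sq_add_mul_sq {r a b t : ℤ} (hr : 2 ≤ r) (ht : 1 ≤ t)
    (htb : t ≤ b) (hba : b ≤ a) (ha : 2 ≤ a) (h21 : t = 1 → a = 2 → 2 ≤ b)
    (h22 : r = 2 → ¬(a = 2 ∧ b = 2)) (h222 : r = 3 → ¬(a = 2 ∧ b = 2 ∧ t = 2)) :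
    (r + 3) * t + 1 ≤ a ^ 2 + b ^ 2 + (r - 2) * t ^ 2 := by
  obtain rfl | rfl | ht3 : t = 1 ∨ t = 2 ∨ 3 ≤ t := by omega
  · obtain rfl | ha3 : a = 2 ∨ 3 ≤ a := by omega
    · nlinarith [h21 rfl rfl]
    · nlinarith
  · obtain rfl | ha3 : a = 2 ∨ 3 ≤ a := by omega
    · obtain rfl : b = 2 := by omega
      obtain rfl | rfl | hr4 : r = 2 ∨ r = 3 ∨ 4 ≤ r := by omega
      · exact absurd ⟨rfl, rfl⟩ (h22 rfl)
      · exact absurd ⟨rfl, rfl, rfl⟩ (h222 rfl)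
      · nlinarith
    · nlinarith
  · have hrt : 0 ≤ (r - 2) * (t * (t - 1)) :=
      mul_nonneg (by omega) (mul_nonneg (by omega) (by omega))
    nlinarith

lemma lt_mul_of_sq_le_mul {c M N t C d e : ℝ} (hc : 0 < c) (hd : 0 < d) (he : 0 < e)
    (hM : 0 ≤ M) (hCS : C ^ 2 ≤ M * N) (hN : (c + 1) * t + 1 ≤ N)
    (hd2 : (c + 1) / c * M ≤ d ^ 2) (he2 : N - t ≤ e ^ 2) :
    C < d * e := by
  rcases le_or_gt C 0 with hC | hC
  · exact hC.trans_lt (mul_pos hd he)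
  have hMN : 0 < M * N := (pow_pos hC 2).trans_le hCS
  have hMpos : 0 < M := lt_of_le_of_ne hM (by rintro rfl; simp at hMN)
  have hNpos : 0 < N := pos_of_mul_pos_right hMN hM
  have hNt : 0 ≤ N - t := by nlinarith
  have hd2' : (c + 1) * M ≤ c * d ^ 2 := by
    rwa [div_mul_eq_mul_div, div_le_iff₀ hc, mul_comm _ c] at hd2
  have key : c * C ^ 2 < c * (d * e) ^ 2 :=
    calc c * C ^ 2 ≤ c * (M * N) := mul_le_mul_of_nonneg_left hCS hc.le
      _ < M * (c * N + 1) := by linarith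
      _ ≤ M * ((c + 1) * (N - t)) := by gcongr; linarith
      _ = (c + 1) * M * (N - t) := by ring
      _ ≤ c * d ^ 2 * e ^ 2 := mul_le_mul hd2' he2 hNt (by positivity)
      _ = c * (d * e) ^ 2 := by ring
  exact lt_of_pow_lt_pow_left₀ 2 (mul_pos hd he).le (lt_of_mul_lt_mul_left key hc.le)

lemma add_three_mul_add_one_le_sum_sq {r : ℕ} (hr : 2 ≤ r) {n : ℕ → ℤ}
    (hmono : ∀ i j, 1 ≤ i → i ≤ j → j ≤ r → n j ≤ n i) (hnr : 1 ≤ n r) (hn1 : 2 ≤ n 1)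
    (hr2 : r = 2 → ¬(n 1 = 2 ∧ n 2 = 2))
    (hne21 : ¬(n 1 = 2 ∧ ∀ i, 2 ≤ i → i ≤ r → n i = 1))
    (hne222 : ¬(r = 3 ∧ n 1 = 2 ∧ n 2 = 2 ∧ n 3 = 2)) :
    ((r : ℤ) + 3) * n r + 1 ≤ ∑ i ∈ Icc 1 r, n i ^ 2 := by
  have hn2r : n r ≤ n 2 := hmono 2 r (by omega) hr le_rfl
  have hn12 : n 2 ≤ n 1 := hmono 1 2 le_rfl (by omega) hr
  have h21 : n r = 1 → n 1 = 2 → 2 ≤ n 2 := fun hr1 h12 => by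
    have hnot := not_and.1 hne21 h12
    push Not at hnot
    obtain ⟨i, hi2, hir, hi⟩ := hnot
    have := hmono i r (by omega) hir le_rfl
    have := hmono 2 i (by omega) hi2 hir
    omega
  have h222 : (r : ℤ) = 3 → ¬(n 1 = 2 ∧ n 2 = 2 ∧ n r = 2) := fun h3 h => by
    obtain rfl : r = 3 := by exact_mod_cast h3
    exact hne222 ⟨rfl, h⟩
  refine (mul_add_one_le_sq_add_sq_add_mul_sq (by exact_mod_cast hr) hnr hn2r hn12 hn1 h21
    (by exact_mod_cast hr2) h222).trans (sq_add_sq_add_mul_sq_le_sum_sq hr ?_ (by omega))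
  exact fun i hi j hj hij => hmono i j hi.1 hij hj.2

theorem stmt_14_general (r : ℕ) (hr : 2 ≤ r) (d e : ℝ) (hd : 0 < d) (he : 0 < e)
    (m : ℕ → ℝ) (n : ℕ → ℤ)
    (hmono : ∀ i j, 1 ≤ i → i ≤ j → j ≤ r → n j ≤ n i)
    (hpos : ∀ i ∈ Finset.Icc 1 r, 1 ≤ n i)
    (hn1 : 2 ≤ n 1)
    (hr2 : r = 2 → ¬(n 1 = 2 ∧ n 2 = 2))
    (hne21 : ¬(n 1 = 2 ∧ ∀ i, 2 ≤ i → i ≤ r → n i = 1))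
    (hne222 : ¬(r = 3 ∧ n 1 = 2 ∧ n 2 = 2 ∧ n 3 = 2))
    (hd2 : d ^ 2 ≥ ((r : ℝ) + 3) / ((r : ℝ) + 2) *
      ∑ i ∈ Finset.Icc 1 r, (m i) ^ 2)
    (he2 : e ^ 2 ≥ (∑ i ∈ Finset.Icc 1 r, ((n i : ℝ)) ^ 2) - (n r : ℝ)) :
    d * e > ∑ i ∈ Finset.Icc 1 r, m i * (n i : ℝ) := by
  have hN := add_three_mul_add_one_le_sum_sq hr hmono (hpos r (mem_Icc.2 ⟨by omega, le_rfl⟩))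
    hn1 hr2 hne21 hne222
  refine lt_mul_of_sq_le_mul (c := (r : ℝ) + 2) (t := (n r : ℝ)) (by positivity) hd he
    (sum_nonneg fun i _ => sq_nonneg _) (sum_mul_sq_le_sq_mul_sq _ _ _) ?_ ?_ he2
  · exact_mod_cast (by linarith : ((r : ℤ) + 2 + 1) * n r + 1 ≤ ∑ i ∈ Icc 1 r, n i ^ 2)
  · convert hd2 using 3; ring

/-- The numerical core of Case A in the proof of Theorem 2.1 of the paper:
for `r ≥ 2`, positive reals `d, e`, nonnegative reals `m_i` and integers
`n_1 ≥ n_2 ≥ … ≥ n_r ≥ 1` with `n_1 ≥ 2`, excluding `(2,2)` when `r = 2`,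
`(2,1,…,1)`, and `(2,2,2)` when `r = 3`: if `d² ≥ ((r+3)/(r+2)) · Σ m_i²` and
`e² ≥ Σ n_i² − n_r`, then `d·e > Σ m_i n_i`. -/
theorem stmt_14 (r : ℕ) (hr : 2 ≤ r) (d e : ℝ) (hd : 0 < d) (he : 0 < e)
    (m : ℕ → ℝ) (n : ℕ → ℤ)
    (hm : ∀ i ∈ Finset.Icc 1 r, 0 ≤ m i)
    (hmono : ∀ i j, 1 ≤ i → i ≤ j → j ≤ r → n j ≤ n i)
    (hpos : ∀ i ∈ Finset.Icc 1 r, 1 ≤ n i)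
    (hn1 : 2 ≤ n 1)
    (hr2 : r = 2 → ¬(n 1 = 2 ∧ n 2 = 2))
    (hne21 : ¬(n 1 = 2 ∧ ∀ i, 2 ≤ i → i ≤ r → n i = 1))
    (hne222 : ¬(r = 3 ∧ n 1 = 2 ∧ n 2 = 2 ∧ n 3 = 2))
    (hd2 : d ^ 2 ≥ ((r : ℝ) + 3) / ((r : ℝ) + 2) *
      ∑ i ∈ Finset.Icc 1 r, (m i) ^ 2)
    (he2 : e ^ 2 ≥ (∑ i ∈ Finset.Icc 1 r, ((n i : ℝ)) ^ 2) - (n r : ℝ)) :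
    d * e > ∑ i ∈ Finset.Icc 1 r, m i * (n i : ℝ) :=
  stmt_14_general r hr d e hd he m n hmono hpos hn1 hr2 hne21 hne222 hd2 he2
end

section
/- Let r ≥ 9 be an integer, let n_1 ≥ n_2 ≥ … ≥ n_r ≥ 3 be integers with n_1 ≥ 12, and let d, e, m be positive real numbers. If e² ≥ Σ_{i=1}^r n_i² − n_r and d² ≥ ((3r+40)/(3r+39)) · r · m², then d·e > m · Σ_{i=1}^r n_i. -/
/-!
Write `S = ∑ nᵢ`, `Q = ∑ nᵢ²` and `t = n_r`. Cauchy–Schwarz gives `S² ≤ r Q`, so it suffices that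
`S² < (3r+40)/(3r+39) · r · (Q - t)`, which follows from `(3r+40) t < Q`. Monotonicity gives
`Q ≥ n₁² + (r-1) t² ≥ 144 + (r-1) t²`, and the quadratic `(r-1) t² - (3r+40) t + 144` is positive
for `r ≥ 9`, `t ≥ 3`: for `r ≤ 16` its discriminant is negative, and for `r ≥ 16` it is
increasing on `t ≥ 3`, where its value is `15`.
-/

open Finset

theorem sum_sq_Icc_one_ge {r : ℕ} (hr : 1 ≤ r) (f : ℕ → ℝ) {t : ℝ} (ht : 0 ≤ t)
    (hf : ∀ i ∈ Icc 2 r, t ≤ f i) :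
    f 1 ^ 2 + (r - 1) * t ^ 2 ≤ ∑ i ∈ Icc 1 r, f i ^ 2 := by
  rw [← insert_Icc_add_one_left_eq_Icc hr, sum_insert (by simp), one_add_one_eq_two]
  have htail : ∑ _i ∈ Icc 2 r, t ^ 2 ≤ ∑ i ∈ Icc 2 r, f i ^ 2 :=
    sum_le_sum fun i hi => pow_le_pow_left₀ ht (hf i hi) 2
  rw [sum_const, Nat.card_Icc, nsmul_eq_mul, Nat.cast_sub (by omega)] at htail
  push_cast at htail
  linarith

theorem three_mul_add_forty_mul_lt {R t : ℝ} (hR : 9 ≤ R) (ht : 3 ≤ t) :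
    (3 * R + 40) * t < 144 + (R - 1) * t ^ 2 := by
  rcases le_total R 16 with hR16 | hR16
  · -- `4 (R-1)` times the quadratic is a square plus `-(9R² - 336R + 2176) > 0`.
    have hdisc : 0 < -(9 * R ^ 2 - 336 * R + 2176) := by nlinarith
    nlinarith [sq_nonneg (2 * (R - 1) * t - (3 * R + 40))]
  · have hslope : 0 ≤ (R - 1) * (t + 3) - (3 * R + 40) := by nlinarith
    nlinarith [mul_nonneg (sub_nonneg.2 ht) hslope]

theorem sq_lt_of_sq_le_mul {R S Q t c : ℝ} (hR : 0 < R) (hc : 0 < c) (hS : S ^ 2 ≤ R * Q)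
    (hQ : (c + 1) * t < Q) :
    S ^ 2 < (c + 1) / c * R * (Q - t) := by
  have hgap : (c + 1) / c * R * (Q - t) - R * Q = R / c * (Q - (c + 1) * t) := by
    field_simp
    ring
  have : 0 < R / c * (Q - (c + 1) * t) := mul_pos (div_pos hR hc) (by linarith)
  linarith

theorem mul_lt_mul_of_sq_lt {A B S d e m : ℝ} (hd : 0 ≤ d) (he : 0 ≤ e) (hm : 0 < m)
    (hB : 0 ≤ B) (hS : S ^ 2 < A * B) (hd2 : A * m ^ 2 ≤ d ^ 2) (he2 : B ≤ e ^ 2) :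
    m * S < d * e := by
  have hsq : (m * S) ^ 2 < (d * e) ^ 2 := calc
    (m * S) ^ 2 = m ^ 2 * S ^ 2 := by ring
    _ < m ^ 2 * (A * B) := by gcongr
    _ = A * m ^ 2 * B := by ring
    _ ≤ d ^ 2 * e ^ 2 := mul_le_mul hd2 he2 hB (sq_nonneg d)
    _ = (d * e) ^ 2 := by ring
  exact (le_abs_self _).trans_lt (abs_lt_of_sq_lt_sq hsq (mul_nonneg hd he))

/-- The numerical argument of Case 2(iii) in the proof of Theorem 2.11 of the
paper: for `r ≥ 9`, integers `n_1 ≥ n_2 ≥ … ≥ n_r ≥ 3` with `n_1 ≥ 12` and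
positive reals `d, e, m`, if `e² ≥ Σ n_i² − n_r` and
`d² ≥ ((3r+40)/(3r+39)) · r · m²`, then `d·e > m · Σ n_i`. -/
theorem stmt_16 (r : ℕ) (hr : 9 ≤ r) (n : ℕ → ℤ)
    (hmono : ∀ i j, 1 ≤ i → i ≤ j → j ≤ r → n j ≤ n i)
    (h3 : ∀ i ∈ Finset.Icc 1 r, 3 ≤ n i)
    (hn1 : 12 ≤ n 1)
    (d e m : ℝ) (hd : 0 < d) (he : 0 < e) (hm : 0 < m)
    (he2 : e ^ 2 ≥ (∑ i ∈ Finset.Icc 1 r, ((n i : ℝ)) ^ 2) - (n r : ℝ))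
    (hd2 : d ^ 2 ≥ (3 * (r : ℝ) + 40) / (3 * (r : ℝ) + 39) * (r : ℝ) * m ^ 2) :
    d * e > m * ∑ i ∈ Finset.Icc 1 r, (n i : ℝ) := by
  have hR : (9 : ℝ) ≤ r := by exact_mod_cast hr
  have ht : (3 : ℝ) ≤ n r := by exact_mod_cast h3 r (by simp; omega)
  have hn1sq : (144 : ℝ) ≤ (n 1 : ℝ) ^ 2 := by
    have : (12 : ℝ) ≤ n 1 := by exact_mod_cast hn1
    nlinarith
  have hQ : (3 * (r : ℝ) + 40) * n r < ∑ i ∈ Icc 1 r, (n i : ℝ) ^ 2 := calc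
    (3 * (r : ℝ) + 40) * n r < 144 + (r - 1) * (n r : ℝ) ^ 2 := three_mul_add_forty_mul_lt hR ht
    _ ≤ (n 1 : ℝ) ^ 2 + (r - 1) * (n r : ℝ) ^ 2 := by gcongr
    _ ≤ ∑ i ∈ Icc 1 r, (n i : ℝ) ^ 2 :=
      sum_sq_Icc_one_ge (by omega) (fun i => (n i : ℝ)) (by linarith) fun i hi => by
        simp only [mem_Icc] at hi
        exact_mod_cast hmono i r (by omega) hi.2 le_rfl
  have hCS : (∑ i ∈ Icc 1 r, (n i : ℝ)) ^ 2 ≤ r * ∑ i ∈ Icc 1 r, (n i : ℝ) ^ 2 := by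
    simpa using sq_sum_le_card_mul_sum_sq (s := Icc 1 r) (f := fun i => (n i : ℝ))
  have hS := sq_lt_of_sq_le_mul (t := n r) (c := 3 * (r : ℝ) + 39) (by positivity)
    (by positivity) hCS (by linarith)
  rw [show 3 * (r : ℝ) + 39 + 1 = 3 * r + 40 by ring] at hS
  have hgap : 0 ≤ ∑ i ∈ Icc 1 r, (n i : ℝ) ^ 2 - n r := by nlinarith
  exact mul_lt_mul_of_sq_lt hd.le he.le hm hgap hS hd2 he2
end
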